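/- Let R be a commutative ring, let n, M ≥ 1 and m ≥ 1 be natural numbers, let α : Fin n → R satisfy that α i - α j is a unit for i ≠ j, and let β : Fin M → R satisfy that β i - β j is a unit for i ≠ j. Consider the ring homomorphism Φ from (R[X])[Y] to the product ring ∏_{(j,i) : Fin M × Fin n} R[X]/⟨X^m⟩ that sends p to the tuple whose (j,i)-component is the residue modulo X^m of Polynomial.taylor (α i) (Polynomial.eval (C (β j)) p), where p is first evaluated at Y = C(β j) to give an element of R[X]. Then the kernel of Φ is exactly the ideal of (R[X])[Y] generated by the two elements C(F) and G, where F = (∏_{i} (X - C (α i)))^m ∈ R[X] and G = ∏_{j} (Y - C (C (β j))) ∈ (R[X])[Y]. In particular Φ induces an injective ring homomorphism on the quotient (R[X])[Y]/⟨C(F), G⟩ (the multivariable Mattson–Solomon map). -/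

import Mathlib

/-!
A Taylor shift by `a` turns divisibility by `X ^ m` into divisibility by `(X - a) ^ m`, and the
`X - α i` are pairwise comaximal, so `p` lies in the kernel iff `F ∣ p(β j)` for every `j`.
Divide `p` by the monic `G` with remainder `r`. Over `R[X]/(F)` the image of `r` has `Y`-degree
`< M` and vanishes at the `M` nodes `β j`, whose differences are units; so it is divisible by the
monic degree-`M` polynomial `∏ j, (Y - β j)` and hence zero. Thus `C F ∣ r` and
`p ∈ ⟨C F, G⟩`.
-/

open Polynomial

namespace Polynomial

variable {R : Type*} [CommRing R]

theorem taylor_X_sub_C_pow (a : R) (m : ℕ) : taylor a ((X - C a) ^ m) = X ^ m := by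
  rw [← taylorAlgHom_apply, map_pow, taylorAlgHom_apply, map_sub, taylor_X, taylor_C,
    add_sub_cancel_right]

theorem X_pow_dvd_taylor_iff {a : R} {m : ℕ} {q : R[X]} :
    X ^ m ∣ taylor a q ↔ (X - C a) ^ m ∣ q := by
  rw [← taylor_X_sub_C_pow a m]
  exact map_dvd_iff (taylorEquiv a)

section Nodes

variable {ι : Type*} {γ : ι → R}

theorem pairwise_isCoprime_X_sub_C (hγ : Pairwise fun i j => IsUnit (γ i - γ j)) :
    Pairwise fun i j => IsCoprime (X - C (γ i)) (X - C (γ j)) :=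
  fun _ _ hij => isCoprime_X_sub_C_of_isUnit_sub (hγ hij)

theorem prod_X_sub_C_pow_dvd_iff [Fintype ι] (hγ : Pairwise fun i j => IsUnit (γ i - γ j))
    {m : ℕ} {q : R[X]} : (∏ i, (X - C (γ i))) ^ m ∣ q ↔ ∀ i, (X - C (γ i)) ^ m ∣ q := by
  rw [← Finset.prod_pow]
  constructor
  · intro h i
    exact (Finset.dvd_prod_of_mem (fun i => (X - C (γ i)) ^ m) (Finset.mem_univ i)).trans h
  · intro h
    exact Fintype.prod_dvd_of_coprime (fun i j hij => (pairwise_isCoprime_X_sub_C hγ hij).pow) h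

theorem eq_zero_of_degree_lt_card_of_eval_eq_zero [Fintype ι]
    (hγ : Pairwise fun i j => IsUnit (γ i - γ j)) {r : R[X]} (hdeg : r.degree < Fintype.card ι)
    (hroot : ∀ i, r.eval (γ i) = 0) : r = 0 := by
  nontriviality R
  have hG : (∏ i, (X - C (γ i))).Monic := monic_prod_of_monic _ _ fun i _ => monic_X_sub_C (γ i)
  by_contra hr
  refine hG.not_dvd_of_degree_lt hr ?_ ?_
  · rwa [degree_eq_natDegree hG.ne_zero, natDegree_finsetProd_X_sub_C_eq_card]
  · exact Fintype.prod_dvd_of_coprime (pairwise_isCoprime_X_sub_C hγ)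
      fun i => dvd_iff_isRoot.2 (hroot i)

theorem mem_span_C_prod_X_sub_C_iff [Fintype ι] (hγ : Pairwise fun i j => IsUnit (γ i - γ j))
    {f : R} {p : R[X]} :
    p ∈ Ideal.span {C f, ∏ i, (X - C (γ i))} ↔ ∀ i, f ∣ p.eval (γ i) := by
  set G := ∏ i, (X - C (γ i))
  have hG : G.Monic := monic_prod_of_monic _ _ fun i _ => monic_X_sub_C (γ i)
  have hGγ : ∀ i, G.eval (γ i) = 0 := fun i => by
    simpa [G, eval_prod] using Finset.prod_eq_zero (Finset.mem_univ i) (by simp)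
  constructor
  · rintro hp i
    obtain ⟨a, b, rfl⟩ := Ideal.mem_span_pair.1 hp
    simp [hGγ i]
  · intro h
    nontriviality R
    have hr : ∀ i, f ∣ (p %ₘ G).eval (γ i) := fun i => by
      simpa [modByMonic_eq_sub_mul_div p G, hGγ i] using h i
    let π := Ideal.Quotient.mk (Ideal.span {f})
    have hπr : (p %ₘ G).map π = 0 := by
      refine eq_zero_of_degree_lt_card_of_eval_eq_zero (γ := fun i => π (γ i))
        (fun i j hij => by simpa only [map_sub] using (hγ hij).map π) ?_ fun i => ?_
      · refine degree_map_le.trans_lt ?_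
        rw [← Finset.card_univ, ← natDegree_finsetProd_X_sub_C_eq_card Finset.univ γ,
          ← degree_eq_natDegree hG.ne_zero]
        exact degree_modByMonic_lt p hG
      · rw [eval_map, eval₂_at_apply, Ideal.Quotient.eq_zero_iff_mem, Ideal.mem_span_singleton]
        exact hr i
    have hCf : C f ∣ p %ₘ G := by
      refine (C_dvd_iff_dvd_coeff _ _).2 fun k => ?_
      rw [← Ideal.mem_span_singleton, ← Ideal.Quotient.eq_zero_iff_mem, ← coeff_map, hπr,
        coeff_zero]
    rw [← modByMonic_add_div p G]
    refine add_mem ?_ (Ideal.mul_mem_right _ _ (Ideal.subset_span (by simp)))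
    exact Ideal.span_mono (by simp) (Ideal.mem_span_singleton.2 hCf)

end Nodes

section MattsonSolomon

variable {ι κ : Type*}

noncomputable def mattsonSolomonHom (m : ℕ) (α : ι → R) (β : κ → R) :
    R[X][X] →+* (κ × ι → R[X] ⧸ Ideal.span {(X : R[X]) ^ m}) :=
  RingHom.pi fun ji => (Ideal.Quotient.mk _).comp
    ((taylorEquiv (α ji.2)).toRingHom.comp (evalRingHom (C (β ji.1))))

theorem mattsonSolomonHom_apply (m : ℕ) (α : ι → R) (β : κ → R) (p : R[X][X]) (ji : κ × ι) :
    mattsonSolomonHom m α β p ji =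
      Ideal.Quotient.mk _ (taylor (α ji.2) (p.eval (C (β ji.1)))) :=
  rfl

theorem mattsonSolomonHom_eq_zero_iff [Fintype ι] {m : ℕ} {α : ι → R} {β : κ → R}
    (hα : Pairwise fun i j => IsUnit (α i - α j)) {p : R[X][X]} :
    mattsonSolomonHom m α β p = 0 ↔ ∀ j, (∏ i, (X - C (α i))) ^ m ∣ p.eval (C (β j)) := by
  simp only [funext_iff, Prod.forall, mattsonSolomonHom_apply, Pi.zero_apply,
    Ideal.Quotient.eq_zero_iff_mem, Ideal.mem_span_singleton, X_pow_dvd_taylor_iff,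
    prod_X_sub_C_pow_dvd_iff hα]

theorem ker_mattsonSolomonHom [Fintype ι] [Fintype κ] (m : ℕ) {α : ι → R} {β : κ → R}
    (hα : Pairwise fun i j => IsUnit (α i - α j)) (hβ : Pairwise fun i j => IsUnit (β i - β j)) :
    RingHom.ker (mattsonSolomonHom m α β) =
      Ideal.span {C ((∏ i, (X - C (α i))) ^ m), ∏ j, (X - C (C (β j)))} := by
  ext p
  rw [RingHom.mem_ker, mattsonSolomonHom_eq_zero_iff hα,
    mem_span_C_prod_X_sub_C_iff fun i j hij => by simpa only [C_sub] using (hβ hij).map C]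

end MattsonSolomon

end Polynomial

theorem multivariable_mattson_solomon_general {R : Type*} [CommRing R] (n M m : ℕ)
    (α : Fin n → R) (hα : ∀ i j : Fin n, i ≠ j → IsUnit (α i - α j))
    (β : Fin M → R) (hβ : ∀ i j : Fin M, i ≠ j → IsUnit (β i - β j)) :
    (∀ p : Polynomial (Polynomial R),
      (∀ ji : Fin M × Fin n,
          Ideal.Quotient.mk (Ideal.span {(X : R[X]) ^ m})
            (Polynomial.taylor (α ji.2) (p.eval (C (β ji.1)))) = 0) ↔
        p ∈ Ideal.span ({Polynomial.C ((∏ i : Fin n, (X - C (α i))) ^ m),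
            ∏ j : Fin M, (X - C (C (β j)))} : Set (Polynomial (Polynomial R)))) ∧
    ∃ ψ : (Polynomial (Polynomial R) ⧸
        Ideal.span ({Polynomial.C ((∏ i : Fin n, (X - C (α i))) ^ m),
            ∏ j : Fin M, (X - C (C (β j)))} : Set (Polynomial (Polynomial R)))) →+*
        (Fin M × Fin n → R[X] ⧸ Ideal.span {(X : R[X]) ^ m}),
      Function.Injective ψ ∧
        ∀ p : Polynomial (Polynomial R),
          ψ (Ideal.Quotient.mk _ p) =
            fun ji : Fin M × Fin n =>
              Ideal.Quotient.mk (Ideal.span {(X : R[X]) ^ m})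
                (Polynomial.taylor (α ji.2) (p.eval (C (β ji.1)))) := by
  have hker := ker_mattsonSolomonHom m hα hβ
  refine ⟨fun p => ?_, ?_⟩
  · simp only [← hker, RingHom.mem_ker, funext_iff, mattsonSolomonHom_apply, Pi.zero_apply]
  · refine ⟨Ideal.Quotient.lift _ (mattsonSolomonHom m α β) fun a ha => ?_, ?_, fun p => ?_⟩
    · rwa [← hker, RingHom.mem_ker] at ha
    · exact RingHom.lift_injective_of_ker_le_ideal _ _ hker.le
    · ext ji
      rw [Ideal.Quotient.lift_mk, mattsonSolomonHom_apply]

/-- The multivariable Mattson–Solomon map: the homomorphism from `(R[X])[Y]` to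
`∏ (j,i), R[X]/⟨X^m⟩` sending `p` to the tuple of residues of
`taylor (α i) (p.eval (C (β j)))` has kernel `⟨C F, G⟩` where
`F = (∏ i, (X - C (α i)))^m` and `G = ∏ j, (Y - C (C (β j)))`, and hence induces
an injective ring homomorphism on `(R[X])[Y]/⟨C F, G⟩`. -/
theorem multivariable_mattson_solomon {R : Type*} [CommRing R] (n M m : ℕ)
    (hn : 1 ≤ n) (hM : 1 ≤ M) (hm : 1 ≤ m)
    (α : Fin n → R) (hα : ∀ i j : Fin n, i ≠ j → IsUnit (α i - α j))
    (β : Fin M → R) (hβ : ∀ i j : Fin M, i ≠ j → IsUnit (β i - β j)) :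
    (∀ p : Polynomial (Polynomial R),
      (∀ ji : Fin M × Fin n,
          Ideal.Quotient.mk (Ideal.span {(X : R[X]) ^ m})
            (Polynomial.taylor (α ji.2) (p.eval (C (β ji.1)))) = 0) ↔
        p ∈ Ideal.span ({Polynomial.C ((∏ i : Fin n, (X - C (α i))) ^ m),
            ∏ j : Fin M, (X - C (C (β j)))} : Set (Polynomial (Polynomial R)))) ∧
    ∃ ψ : (Polynomial (Polynomial R) ⧸
        Ideal.span ({Polynomial.C ((∏ i : Fin n, (X - C (α i))) ^ m),
            ∏ j : Fin M, (X - C (C (β j)))} : Set (Polynomial (Polynomial R)))) →+*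
        (Fin M × Fin n → R[X] ⧸ Ideal.span {(X : R[X]) ^ m}),
      Function.Injective ψ ∧
        ∀ p : Polynomial (Polynomial R),
          ψ (Ideal.Quotient.mk _ p) =
            fun ji : Fin M × Fin n =>
              Ideal.Quotient.mk (Ideal.span {(X : R[X]) ^ m})
                (Polynomial.taylor (α ji.2) (p.eval (C (β ji.1)))) :=
  multivariable_mattson_solomon_general n M m α hα β hβ
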